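/- arXiv:2307.05772 — 3 statements merged into one kernel-verified Lean document; each statement's English description precedes it below -/
import Mathlib

section
/- Let m be a basic probability assignment on a finite frame Θ with induced belief function Bel(A) = ∑_{B⊆A} m(B), and let BetP be its pignistic probability. Then for every A ⊆ Θ, BetP(A) := ∑_{x∈A} BetP(x) ≥ Bel(A); i.e., the pignistic probability is consistent with Bel. -/
open Finset

theorem stmt_3 {Θ : Type*} [Fintype Θ] [DecidableEq Θ] [Nonempty Θ]
    (m : Finset Θ → ℝ)
    (h0 : m ∅ = 0) (hnn : ∀ A, 0 ≤ m A)
    (hsum : ∑ A : Finset Θ, m A = 1)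
    (Bel : Finset Θ → ℝ)
    (hBel : ∀ A, Bel A = ∑ B ∈ A.powerset, m B)
    (BetP : Θ → ℝ)
    (hBetP : ∀ x, BetP x = ∑ A ∈ Finset.univ.filter (fun A : Finset Θ => x ∈ A), m A / A.card) :
    ∀ A : Finset Θ, Bel A ≤ ∑ x ∈ A, BetP x := by
  intro A
  rw [hBel]
  have hR : ∑ x ∈ A, BetP x
      = ∑ C : Finset Θ, ((A ∩ C).card : ℝ) * (m C / C.card) := by
    simp_rw [hBetP, Finset.sum_filter]
    rw [Finset.sum_comm]
    refine Finset.sum_congr rfl fun C _ => ?_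
    rw [Finset.sum_ite_mem, Finset.sum_const, nsmul_eq_mul]
  rw [hR]
  have hL : ∑ B ∈ A.powerset, m B
      = ∑ C : Finset Θ, if C ⊆ A then m C else 0 := by
    rw [← Finset.sum_filter]
    refine Finset.sum_congr ?_ fun _ _ => rfl
    ext B; simp
  rw [hL]
  refine Finset.sum_le_sum fun C _ => ?_
  by_cases hCA : C ⊆ A
  · simp only [hCA, if_true]
    rw [Finset.inter_eq_right.mpr hCA]
    rcases eq_or_ne C ∅ with h | h
    · simp [h, h0]
    · have hc : (C.card : ℝ) ≠ 0 := by
        simpa using Finset.nonempty_iff_ne_empty.mpr h |>.card_pos.ne'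
      rw [mul_div_assoc']
      rw [mul_comm, mul_div_assoc, div_self hc, mul_one]
  · simp only [hCA, if_false]
    have := hnn C
    positivity
end

section
/- Let m be a BPA on a finite frame Θ = {x_1,…,x_n} with belief function Bel, and let π be a permutation of {1,…,n}. Then the probability P^π defined by P^π(x_{π(i)}) = ∑ { m(A) : x_{π(i)} ∈ A, x_{π(j)} ∉ A for j < i } is consistent with Bel, i.e., P^π(A) ≥ Bel(A) for all A ⊆ Θ. -/
open Finset

/-!
A nonempty focal set `B` is charged by `P^π` exactly to its first element in the order `π`.
If `B ⊆ A`, that element lies in `A`, so the mass `m B` counted by `Bel A` also appears in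
`∑_{x ∈ A} P^π(x)`, and no focal set is counted twice.
-/

section FirstHit

variable {ι α : Type*} [LinearOrder ι] [Fintype ι] [Fintype α] [DecidableEq α]

def firstHitClass (x : ι → α) (i : ι) : Finset (Finset α) :=
  univ.filter fun B => x i ∈ B ∧ ∀ j, j < i → x j ∉ B

theorem mem_firstHitClass {x : ι → α} {i : ι} {B : Finset α} :
    B ∈ firstHitClass x i ↔ x i ∈ B ∧ ∀ j, j < i → x j ∉ B := by
  simp [firstHitClass]

theorem pairwise_disjoint_firstHitClass (x : ι → α) :
    Pairwise (Function.onFun Disjoint (firstHitClass x)) := by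
  intro i j hij
  simp only [Function.onFun, disjoint_left, mem_firstHitClass]
  rintro B ⟨hiB, hi⟩ ⟨hjB, hj⟩
  rcases hij.lt_or_gt with h | h
  · exact hj i h hiB
  · exact hi j h hjB

theorem exists_mem_firstHitClass {x : ι → α} {B : Finset α}
    (h : ∃ i, x i ∈ B) : ∃ i, x i ∈ B ∧ B ∈ firstHitClass x i := by
  obtain ⟨i, hiB, hmin⟩ := wellFounded_lt.has_min {i | x i ∈ B} h
  exact ⟨i, hiB, mem_firstHitClass.2 ⟨hiB, fun j hj hjB => hmin j hjB hj⟩⟩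

theorem sum_powerset_le_sum_firstHitClass {M : Type*} [AddCommMonoid M]
    [PartialOrder M] [IsOrderedAddMonoid M] {x : ι → α} (hx : Function.Surjective x)
    {m : Finset α → M} (h0 : m ∅ = 0) (hnn : ∀ B, 0 ≤ m B) (A : Finset α) :
    ∑ B ∈ A.powerset, m B ≤ ∑ i ∈ univ.filter (x · ∈ A), ∑ B ∈ firstHitClass x i, m B := by
  rw [← sum_erase _ h0, ← sum_biUnion ((pairwise_disjoint_firstHitClass x).set_pairwise _)]
  refine sum_le_sum_of_subset_of_nonneg (fun B hB => ?_) fun B _ _ => hnn B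
  obtain ⟨hBne, hBA⟩ := mem_erase.1 hB
  obtain ⟨y, hy⟩ := nonempty_iff_ne_empty.2 hBne
  obtain ⟨k, rfl⟩ := hx y
  obtain ⟨i, hiB, hBi⟩ := exists_mem_firstHitClass ⟨k, hy⟩
  exact mem_biUnion.2 ⟨i, mem_filter.2 ⟨mem_univ i, mem_powerset.1 hBA hiB⟩, hBi⟩

end FirstHit

theorem stmt_5_general {Θ : Type*} [DecidableEq Θ] {n : ℕ} [Fintype Θ]
    (e : Fin n ≃ Θ)
    (m : Finset Θ → ℝ)
    (h0 : m ∅ = 0) (hnn : ∀ A, 0 ≤ m A)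
    (Bel : Finset Θ → ℝ)
    (hBel : ∀ A, Bel A = ∑ B ∈ A.powerset, m B)
    (π : Equiv.Perm (Fin n))
    (P : Fin n → ℝ)
    (hP : ∀ i, P i = ∑ A ∈ Finset.univ.filter
        (fun A : Finset Θ => e (π i) ∈ A ∧ ∀ j : Fin n, j < i → e (π j) ∉ A), m A) :
    ∀ A : Finset Θ, Bel A ≤ ∑ i ∈ Finset.univ.filter (fun i : Fin n => e (π i) ∈ A), P i := by
  intro A
  calc Bel A = ∑ B ∈ A.powerset, m B := hBel A
    _ ≤ ∑ i ∈ univ.filter (fun i => e (π i) ∈ A), ∑ B ∈ firstHitClass (fun i => e (π i)) i, m B :=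
      sum_powerset_le_sum_firstHitClass (e.surjective.comp π.surjective) h0 hnn A
    -- the two filters differ only in the `Decidable` instance used for `j < i`
    _ = _ := sum_congr rfl fun i _ => by rw [hP, firstHitClass]; congr

theorem stmt_5 {Θ : Type*} [DecidableEq Θ] {n : ℕ} [Fintype Θ] [Nonempty Θ]
    (e : Fin n ≃ Θ)
    (m : Finset Θ → ℝ)
    (h0 : m ∅ = 0) (hnn : ∀ A, 0 ≤ m A)
    (hsum : ∑ A : Finset Θ, m A = 1)
    (Bel : Finset Θ → ℝ)
    (hBel : ∀ A, Bel A = ∑ B ∈ A.powerset, m B)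
    (π : Equiv.Perm (Fin n))
    (P : Fin n → ℝ)
    (hP : ∀ i, P i = ∑ A ∈ Finset.univ.filter
        (fun A : Finset Θ => e (π i) ∈ A ∧ ∀ j : Fin n, j < i → e (π j) ∉ A), m A) :
    ∀ A : Finset Θ, Bel A ≤ ∑ i ∈ Finset.univ.filter (fun i : Fin n => e (π i) ∈ A), P i :=
  stmt_5_general e m h0 hnn Bel hBel π P hP
end

section
/- Let m be a BPA on finite Θ = {x_1,…,x_n} with belief function Bel. The pignistic probability BetP is the arithmetic mean over all n! permutations π of the extremal probabilities P^π: for each x ∈ Θ, BetP(x) = (1/n!) ∑_π P^π(x), where P^π(x_{π(i)}) = ∑{ m(A) : x_{π(i)} ∈ A, x_{π(j)} ∉ A ∀ j<i }. -/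
open Finset

/-- Counting lemma: the permutations for which `f a` is minimal among `f b`, `b ∈ B`,
number exactly `n! / B.card` (stated multiplicatively). -/
lemma count_min_perm {n : ℕ} (B : Finset (Fin n)) (a : Fin n) (ha : a ∈ B) :
    B.card * ((Finset.univ.filter
      (fun f : Equiv.Perm (Fin n) => ∀ b ∈ B, f a ≤ f b)).card) = n.factorial := by
  classical
  set S : Fin n → Finset (Equiv.Perm (Fin n)) :=
    fun b => Finset.univ.filter (fun f : Equiv.Perm (Fin n) => ∀ b' ∈ B, f b ≤ f b') with hS
  have hswapmem : ∀ b ∈ B, ∀ b' ∈ B, Equiv.swap a b b' ∈ B := by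
    intro b hb b' hb'
    rcases eq_or_ne b' a with rfl | h1
    · simpa [Equiv.swap_apply_left] using hb
    rcases eq_or_ne b' b with rfl | h2
    · simpa [Equiv.swap_apply_right] using ha
    · rwa [Equiv.swap_apply_of_ne_of_ne h1 h2]
  have hcard : ∀ b ∈ B, (S b).card = (S a).card := by
    intro b hb
    apply Finset.card_bij' (i := fun f _ => f * Equiv.swap a b)
      (j := fun f _ => f * Equiv.swap a b)
    · intro f hf
      simp only [hS, Finset.mem_filter, Finset.mem_univ, true_and] at hf ⊢
      intro b' hb'
      have h1 : (f * Equiv.swap a b) a = f b := by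
        simp [Equiv.Perm.mul_apply, Equiv.swap_apply_left]
      have h2 : (f * Equiv.swap a b) b' = f (Equiv.swap a b b') := rfl
      rw [h1, h2]
      exact hf _ (hswapmem b hb b' hb')
    · intro f hf
      simp only [hS, Finset.mem_filter, Finset.mem_univ, true_and] at hf ⊢
      intro b' hb'
      have h1 : (f * Equiv.swap a b) b = f a := by
        simp [Equiv.Perm.mul_apply, Equiv.swap_apply_right]
      have h2 : (f * Equiv.swap a b) b' = f (Equiv.swap a b b') := rfl
      rw [h1, h2]
      exact hf _ (hswapmem b hb b' hb')
    · intro f _; simp [mul_assoc]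
    · intro f _; simp [mul_assoc]
  have hcover : (Finset.univ : Finset (Equiv.Perm (Fin n))) = B.biUnion S := by
    apply Finset.eq_of_subset_of_card_le
    · intro f _
      obtain ⟨b, hb, hmin⟩ := Finset.exists_min_image B (fun b => f b) ⟨a, ha⟩
      exact Finset.mem_biUnion.mpr ⟨b, hb, by simp [hS]; exact hmin⟩
    · exact Finset.card_le_card (Finset.subset_univ _)
  have hdisj : ∀ b ∈ B, ∀ b' ∈ B, b ≠ b' → Disjoint (S b) (S b') := by
    intro b hb b' hb' hne
    rw [Finset.disjoint_left]
    intro f hf hf'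
    simp only [hS, Finset.mem_filter, Finset.mem_univ, true_and] at hf hf'
    exact hne (f.injective (le_antisymm (hf b' hb') (hf' b hb)))
  have : n.factorial = ∑ b ∈ B, (S b).card := by
    rw [← Finset.card_biUnion hdisj, ← hcover, Finset.card_univ, Fintype.card_perm,
      Fintype.card_fin]
  rw [this, Finset.sum_congr rfl hcard, Finset.sum_const, smul_eq_mul]

/-- The pignistic probability is the arithmetic mean over all permutations of the
extremal probabilities `P^π`; here for `x = e (π i)` with `i = π.symm (e.symm x)`,
`P^π x` is the mass of focal sets containing `x` but no `e (π j)` with `j < i`. -/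
theorem stmt_17 {Θ : Type*} [DecidableEq Θ] {n : ℕ} [Fintype Θ]
    (e : Fin n ≃ Θ)
    (m : Finset Θ → ℝ)
    (h0 : m ∅ = 0) (hnn : ∀ A, 0 ≤ m A)
    (hsum : ∑ A : Finset Θ, m A = 1)
    (BetP : Θ → ℝ)
    (hBetP : ∀ x, BetP x = ∑ A ∈ Finset.univ.filter (fun A : Finset Θ => x ∈ A), m A / A.card)
    (Pext : Equiv.Perm (Fin n) → Θ → ℝ)
    (hPext : ∀ (π : Equiv.Perm (Fin n)) (x : Θ),
      Pext π x = ∑ A ∈ Finset.univ.filter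
        (fun A : Finset Θ => x ∈ A ∧ ∀ j : Fin n, j < π.symm (e.symm x) → e (π j) ∉ A), m A) :
    ∀ x : Θ, BetP x = (1 / (n.factorial : ℝ)) * ∑ π : Equiv.Perm (Fin n), Pext π x := by
  classical
  intro x
  set a : Fin n := e.symm x with ha
  -- rewrite the condition: x is first among elements of A
  have hcond : ∀ (π : Equiv.Perm (Fin n)) (A : Finset Θ),
      (x ∈ A ∧ ∀ j : Fin n, j < π.symm a → e (π j) ∉ A) ↔
      (x ∈ A ∧ ∀ y ∈ A, π.symm a ≤ π.symm (e.symm y)) := by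
    intro π A
    constructor
    · rintro ⟨hx, h⟩
      refine ⟨hx, fun y hy => ?_⟩
      by_contra hlt
      push_neg at hlt
      have := h (π.symm (e.symm y)) hlt
      simp at this
      exact this hy
    · rintro ⟨hx, h⟩
      refine ⟨hx, fun j hj hmem => ?_⟩
      have := h (e (π j)) hmem
      simp at this
      exact absurd hj (not_lt.mpr this)
  -- swap the sums
  have hswap : ∑ π : Equiv.Perm (Fin n), Pext π x =
      ∑ A : Finset Θ, (if x ∈ A then
        ((Finset.univ.filter (fun π : Equiv.Perm (Fin n) =>
          ∀ y ∈ A, π.symm a ≤ π.symm (e.symm y))).card : ℝ) * m A else 0) := by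
    have : ∀ π : Equiv.Perm (Fin n), Pext π x = ∑ A : Finset Θ,
        (if x ∈ A ∧ ∀ y ∈ A, π.symm a ≤ π.symm (e.symm y) then m A else 0) := by
      intro π
      rw [hPext π x, Finset.sum_filter]
      exact Finset.sum_congr rfl (fun A _ => by rw [if_congr (hcond π A) rfl rfl])
    rw [Finset.sum_congr rfl (fun π _ => this π), Finset.sum_comm]
    refine Finset.sum_congr rfl (fun A _ => ?_)
    by_cases hx : x ∈ A
    · simp only [hx, true_and, if_true]
      rw [Finset.sum_ite, Finset.sum_const, Finset.sum_const_zero, add_zero, nsmul_eq_mul]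
    · simp [hx]
  -- count permutations for fixed A containing x
  have hcount : ∀ A : Finset Θ, x ∈ A →
      (A.card : ℝ) * ((Finset.univ.filter (fun π : Equiv.Perm (Fin n) =>
        ∀ y ∈ A, π.symm a ≤ π.symm (e.symm y))).card : ℝ) = (n.factorial : ℝ) := by
    intro A hx
    set B : Finset (Fin n) := A.image e.symm with hB
    have haB : a ∈ B := Finset.mem_image.mpr ⟨x, hx, rfl⟩
    have hBcard : B.card = A.card := Finset.card_image_of_injective _ e.symm.injective
    have hcardeq : (Finset.univ.filter (fun π : Equiv.Perm (Fin n) =>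
        ∀ y ∈ A, π.symm a ≤ π.symm (e.symm y))).card =
        (Finset.univ.filter (fun f : Equiv.Perm (Fin n) => ∀ b ∈ B, f a ≤ f b)).card := by
      refine Finset.card_bij' (fun π _ => π.symm) (fun f _ => f.symm) ?_ ?_ ?_ ?_
      case refine_1 =>
        intro π hπ
        simp only [Finset.mem_filter, Finset.mem_univ, true_and] at hπ ⊢
        intro b hb
        obtain ⟨y, hy, rfl⟩ := Finset.mem_image.mp hb
        exact hπ y hy
      case refine_2 =>
        intro f hf
        simp only [Finset.mem_filter, Finset.mem_univ, true_and] at hf ⊢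
        intro y hy
        exact hf _ (Finset.mem_image.mpr ⟨y, hy, rfl⟩)
      case refine_3 => intro π _; simp
      case refine_4 => intro π _; simp
    rw [hcardeq]
    have := count_min_perm B a haB
    rw [hBcard] at this
    exact_mod_cast congrArg (Nat.cast : ℕ → ℝ) this
  rw [hswap, hBetP x, Finset.sum_filter, Finset.mul_sum]
  refine Finset.sum_congr rfl (fun A _ => ?_)
  by_cases hx : x ∈ A
  · simp only [hx, if_true]
    have hA0 : (A.card : ℝ) ≠ 0 := Nat.cast_ne_zero.mpr (Finset.card_ne_zero_of_mem hx)
    have hn0 : (n.factorial : ℝ) ≠ 0 := Nat.cast_ne_zero.mpr n.factorial_ne_zero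
    have hC : ((Finset.univ.filter (fun π : Equiv.Perm (Fin n) =>
        ∀ y ∈ A, π.symm a ≤ π.symm (e.symm y))).card : ℝ) = (n.factorial : ℝ) / A.card := by
      rw [eq_div_iff hA0, mul_comm]
      exact hcount A hx
    rw [hC]
    field_simp
  · simp [hx]
end
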